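/- arXiv:2510.23646 — 3 statements merged into one kernel-verified Lean document; each statement's English description precedes it below -/
import Mathlib

section
/- In the hypercube Q_n, for vertices u, v at distance h, the Hamming distance between their distance-k reachability indicator vectors is Ham(b_u^(k), b_v^(k)) = 2(C(n,k) − [h even and k ≥ h/2]·C(h, h/2)·C(n−h, k−h/2)). In particular, at k = 1, adjacent vertices (h = 1) have Ham = 2n and vertices with h = 2 have Ham = 2n − 4. -/
/-!
Identify a vertex `w` of `Q_n` with the set of coordinates in which it differs from `u`. Then
`S(u,k)` becomes the family of `k`-sets, and `S(v,k)` the family of sets `S` with `#(S ∆ D) = k`,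
where `D` is the `h`-set on which `u` and `v` differ. A `k`-set `S` satisfies `#(S ∆ D) = k` iff
it contains exactly half of `D`, so `|S(u,k) ∩ S(v,k)| = C(h, h/2) C(n-h, k-h/2)` for even `h`
(and `0` for odd `h`), and `|S(u,k) ∆ S(v,k)| = 2 C(n,k) - 2 |S(u,k) ∩ S(v,k)|`.
-/

open Finset

/-- Hamming distance between binary strings (which equals graph distance in the
hypercube `Q_n`). -/
def hd {n : ℕ} (u v : Fin n → Bool) : ℕ := (univ.filter fun i => u i ≠ v i).card

/-- Indicator vector (as a 0/1 function) of the distance-`k` sphere around `u`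
in `Q_n`. -/
def cubeRow {n : ℕ} (u : Fin n → Bool) (k : ℕ) : (Fin n → Bool) → ℕ :=
  fun w => if hd u w = k then 1 else 0

def hamVec {n : ℕ} (x y : (Fin n → Bool) → ℕ) : ℕ :=
  (univ.filter fun w => x w ≠ y w).card

open scoped symmDiff

section Counting

variable {α : Type*} [DecidableEq α]

theorem card_symmDiff_add_two_mul_card_inter (s t : Finset α) :
    #(s ∆ t) + 2 * #(s ∩ t) = #s + #t := by
  rw [Finset.symmDiff_def, card_union_of_disjoint disjoint_sdiff_sdiff]
  have hs := card_sdiff_add_card_inter s t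
  have ht := card_sdiff_add_card_inter t s
  rw [inter_comm] at ht
  omega

variable [Fintype α]

theorem card_filter_card_inter_card_sdiff (D : Finset α) (a b : ℕ) :
    #{S : Finset α | #(S ∩ D) = a ∧ #(S \ D) = b}
      = (#D).choose a * (Fintype.card α - #D).choose b := by
  rw [← card_compl, ← card_powersetCard a D, ← card_powersetCard b Dᶜ, ← card_product]
  have split : ∀ {P Q : Finset α}, P ⊆ D → Q ⊆ Dᶜ →
      (P ∪ Q) ∩ D = P ∧ (P ∪ Q) \ D = Q := by
    intro P Q hP hQ
    rw [subset_compl_iff_disjoint_right] at hQ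
    rw [union_inter_distrib_right, inter_eq_left.2 hP, disjoint_iff_inter_eq_empty.1 hQ,
      union_empty, union_sdiff_distrib, sdiff_eq_empty_iff_subset.2 hP, hQ.sdiff_eq_left,
      empty_union]
    exact ⟨rfl, rfl⟩
  refine card_nbij' (fun S => (S ∩ D, S \ D)) (fun p => p.1 ∪ p.2) ?_ ?_ ?_ ?_
  · intro S hS
    simp only [coe_filter, Set.mem_ofPred_eq, mem_univ, true_and] at hS
    simp only [coe_product, Set.mem_prod, mem_coe, mem_powersetCard]
    exact ⟨⟨inter_subset_right, hS.1⟩,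
      ⟨subset_compl_iff_disjoint_right.2 sdiff_disjoint, hS.2⟩⟩
  · rintro ⟨P, Q⟩ hPQ
    simp only [coe_product, Set.mem_prod, mem_coe, mem_powersetCard] at hPQ
    simp only [coe_filter, Set.mem_ofPred_eq, mem_univ, true_and]
    obtain ⟨⟨hP, rfl⟩, ⟨hQ, rfl⟩⟩ := hPQ
    obtain ⟨h₁, h₂⟩ := split hP hQ
    exact ⟨congrArg card h₁, congrArg card h₂⟩
  · intro S _
    exact sup_inf_sdiff S D
  · rintro ⟨P, Q⟩ hPQ
    simp only [coe_product, Set.mem_prod, mem_coe, mem_powersetCard] at hPQ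
    obtain ⟨h₁, h₂⟩ := split hPQ.1.1 hPQ.2.1
    exact Prod.ext h₁ h₂

theorem card_filter_card_eq_card_symmDiff_eq (D : Finset α) (k : ℕ) :
    #{S : Finset α | #S = k ∧ #(S ∆ D) = k}
      = if Even #D ∧ #D / 2 ≤ k then
          (#D).choose (#D / 2) * (Fintype.card α - #D).choose (k - #D / 2) else 0 := by
  have key : ∀ S : Finset α,
      #S = k ∧ #(S ∆ D) = k ↔ 2 * #(S ∩ D) = #D ∧ #(S ∩ D) + #(S \ D) = k := by
    intro S
    have := card_symmDiff_add_two_mul_card_inter S D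
    have := card_inter_add_card_sdiff S D
    omega
  split_ifs with hcond
  · obtain ⟨⟨m, hm⟩, hmk⟩ := hcond
    rw [← card_filter_card_inter_card_sdiff]
    congr 1
    refine filter_congr fun S _ => ?_
    rw [key]
    omega
  · rw [card_eq_zero, filter_eq_empty_iff]
    intro S _ hS
    rw [key] at hS
    exact hcond ⟨⟨#(S ∩ D), by omega⟩, by omega⟩

end Counting

section FlipSet

variable {ι : Type*} [Fintype ι]

def flipSet (u w : ι → Bool) : Finset ι := {i | u i ≠ w i}

variable [DecidableEq ι]

theorem flipSet_symmDiff_flipSet (u v w : ι → Bool) :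
    flipSet u w ∆ flipSet u v = flipSet v w := by
  ext i
  simp only [flipSet, mem_symmDiff, mem_filter, mem_univ, true_and]
  cases u i <;> cases v i <;> cases w i <;> decide

def flipSetEquiv (u : ι → Bool) : (ι → Bool) ≃ Finset ι where
  toFun := flipSet u
  invFun S i := xor (u i) (decide (i ∈ S))
  left_inv w := by
    funext i
    simp only [flipSet, mem_filter, mem_univ, true_and]
    cases u i <;> cases w i <;> decide
  right_inv S := by
    ext i
    simp only [flipSet, mem_filter, mem_univ, true_and]
    cases u i <;> by_cases hi : i ∈ S <;> simp [hi]

theorem card_filter_flipSet (u : ι → Bool) (P : Finset ι → Prop) [DecidablePred P] :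
    #{w | P (flipSet u w)} = #{S | P S} := by
  simp only [← Fintype.card_subtype]
  exact Fintype.card_congr ((flipSetEquiv u).subtypeEquiv fun _ => Iff.rfl)

end FlipSet

section Hypercube

variable {n : ℕ}

def cubeSphere (u : Fin n → Bool) (k : ℕ) : Finset (Fin n → Bool) := {w | hd u w = k}

theorem hamVec_cubeRow (u v : Fin n → Bool) (k : ℕ) :
    hamVec (cubeRow u k) (cubeRow v k) = #(cubeSphere u k ∆ cubeSphere v k) := by
  unfold hamVec
  congr 1
  ext w
  rw [mem_filter, mem_symmDiff]
  simp only [cubeSphere, cubeRow, mem_filter, mem_univ, true_and]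
  split_ifs <;> simp_all

theorem card_cubeSphere (u : Fin n → Bool) (k : ℕ) : #(cubeSphere u k) = n.choose k := by
  refine (card_filter_flipSet u (#· = k)).trans ?_
  rw [univ_filter_card_eq, card_powersetCard, card_univ, Fintype.card_fin]

theorem card_cubeSphere_inter (u v : Fin n → Bool) (k : ℕ) :
    #(cubeSphere u k ∩ cubeSphere v k)
      = if Even (hd u v) ∧ hd u v / 2 ≤ k then
          (hd u v).choose (hd u v / 2) * (n - hd u v).choose (k - hd u v / 2) else 0 := by
  have hv : ∀ w, hd v w = #(flipSet u w ∆ flipSet u v) := fun w => by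
    rw [flipSet_symmDiff_flipSet]; rfl
  simp only [cubeSphere, ← filter_and, hv]
  refine (card_filter_flipSet u (fun S => #S = k ∧ #(S ∆ flipSet u v) = k)).trans ?_
  rw [card_filter_card_eq_card_symmDiff_eq, Fintype.card_fin]
  rfl

theorem hamVec_cubeRow_eq (u v : Fin n → Bool) (k : ℕ) :
    hamVec (cubeRow u k) (cubeRow v k)
      = 2 * (n.choose k - if Even (hd u v) ∧ hd u v / 2 ≤ k then
          (hd u v).choose (hd u v / 2) * (n - hd u v).choose (k - hd u v / 2) else 0) := by
  have := card_symmDiff_add_two_mul_card_inter (cubeSphere u k) (cubeSphere v k)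
  rw [card_cubeSphere, card_cubeSphere, card_cubeSphere_inter] at this
  rw [hamVec_cubeRow]
  omega

end Hypercube

/-- In `Q_n`, for vertices at distance `h`,
`Ham(b_u^(k), b_v^(k)) = 2(C(n,k) − [h even ∧ k ≥ h/2]·C(h,h/2)·C(n−h,k−h/2))`;
in particular at `k = 1`, `h = 1` gives `2n` and `h = 2` gives `2n − 4`. -/
theorem stmt12 (n k : ℕ) (u v : Fin n → Bool) (h : ℕ) (hh : h = hd u v) :
    hamVec (cubeRow u k) (cubeRow v k)
        = 2 * (Nat.choose n k -
            (if Even h ∧ h / 2 ≤ k then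
              Nat.choose h (h / 2) * Nat.choose (n - h) (k - h / 2) else 0)) ∧
    (h = 1 → k = 1 → hamVec (cubeRow u k) (cubeRow v k) = 2 * n) ∧
    (h = 2 → k = 1 → hamVec (cubeRow u k) (cubeRow v k) = 2 * n - 4) := by
  subst hh
  refine ⟨hamVec_cubeRow_eq u v k, ?_, ?_⟩
  · rintro h₁ rfl
    rw [hamVec_cubeRow_eq, h₁]
    simp
  · rintro h₂ rfl
    rw [hamVec_cubeRow_eq, h₂, if_pos (by decide), Nat.choose_one_right, Nat.div_self two_pos,
      Nat.sub_self, Nat.choose_zero_right, Nat.choose_one_right]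
    omega
end

section
/- Let μ_1, …, μ_N be probability mass functions on a finite set, and let μ̄ = (1/N)∑_v μ_v be their average. Then the average L¹ deviation Ψ = (1/N)∑_v ‖μ_v − μ̄‖₁ satisfies Ψ ≤ 2(1 − ∑_d μ̄(d)²) < 2, with the bound 2∑_d μ̄(d)(1−μ̄(d)) attained exactly when every μ_v is a point mass (Dirac measure). -/
/-!
For `x, y ∈ [0, 1]` one has `x + y - 2xy - |x - y| = 2 min(x, y) (1 - max(x, y)) ≥ 0`.
Summing over `d` gives `‖p - q‖₁ ≤ 2 - 2 ⟨p, q⟩` for probability vectors `p, q`, and averaging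
over `v` with `q = μ̄` turns `⟨μ_v, μ̄⟩` into `‖μ̄‖²`. Equality forces
`min(μ_v d, μ̄ d) (1 - max(μ_v d, μ̄ d)) = 0` everywhere; as `μ_v` is supported inside the
support of `μ̄`, any `d` with `μ_v d > 0` then has `μ_v d = 1` or `μ̄ d = 1`, and in both cases
`μ_v` is the point mass at `d`.
-/

open Finset
open scoped BigOperators

lemma abs_sub_add_two_mul_min_mul_one_sub_max (x y : ℝ) :
    |x - y| + 2 * (min x y * (1 - max x y)) = x + y - 2 * (x * y) := by
  rcases le_total x y with h | h
  · rw [abs_of_nonpos (sub_nonpos.2 h), min_eq_left h, max_eq_right h]; ring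
  · rw [abs_of_nonneg (sub_nonneg.2 h), min_eq_right h, max_eq_left h]; ring

lemma Finset.expect_eq_expect_iff_of_le {ι α : Type*} [AddCommGroup α] [PartialOrder α]
    [IsOrderedAddMonoid α] [Module ℚ≥0 α] {s : Finset ι} {f g : ι → α}
    (hfg : ∀ i ∈ s, f i ≤ g i) : 𝔼 i ∈ s, f i = 𝔼 i ∈ s, g i ↔ ∀ i ∈ s, f i = g i := by
  rw [eq_comm, ← sub_eq_zero, ← expect_sub_distrib,
    expect_eq_zero_iff_of_nonneg fun i hi => sub_nonneg.2 (hfg i hi)]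
  exact forall₂_congr fun i _ => sub_eq_zero.trans eq_comm

section stdSimplex

variable {D : Type*} [Fintype D] {p q : D → ℝ}

lemma sum_mul_one_sub_of_mem_stdSimplex (hq : q ∈ stdSimplex ℝ D) :
    ∑ d, q d * (1 - q d) = 1 - ∑ d, q d ^ 2 := by
  simp only [mul_one_sub, ← sq, sum_sub_distrib, hq.2]

lemma sum_sq_pos_of_mem_stdSimplex (hq : q ∈ stdSimplex ℝ D) : 0 < ∑ d, q d ^ 2 := by
  obtain ⟨d, -, hd⟩ := exists_ne_zero_of_sum_ne_zero (hq.2.trans_ne one_ne_zero)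
  exact sum_pos' (fun d _ => sq_nonneg (q d)) ⟨d, mem_univ d, pow_pos ((hq.1 d).lt_of_ne' hd) 2⟩

lemma eq_ite_of_mem_stdSimplex_of_apply_eq_one [DecidableEq D] (hp : p ∈ stdSimplex ℝ D)
    {x : D} (hx : p x = 1) (d : D) : p d = if d = x then 1 else 0 := by
  split_ifs with h
  · rw [h, hx]
  · have hrest := add_sum_erase univ p (mem_univ x)
    rw [hp.2, hx, add_eq_left] at hrest
    exact (sum_eq_zero_iff_of_nonneg fun i _ => hp.1 i).1 hrest d (mem_erase.2 ⟨h, mem_univ d⟩)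

lemma min_mul_one_sub_max_nonneg_of_mem_stdSimplex (hp : p ∈ stdSimplex ℝ D)
    (hq : q ∈ stdSimplex ℝ D) (d : D) : 0 ≤ min (p d) (q d) * (1 - max (p d) (q d)) :=
  mul_nonneg (le_min (hp.1 d) (hq.1 d)) <| sub_nonneg.2 <|
    max_le (mem_Icc_of_mem_stdSimplex hp d).2 (mem_Icc_of_mem_stdSimplex hq d).2

lemma sum_abs_sub_add_two_mul_sum_min_mul_one_sub_max (hp : p ∈ stdSimplex ℝ D)
    (hq : q ∈ stdSimplex ℝ D) :
    ∑ d, |p d - q d| + 2 * ∑ d, min (p d) (q d) * (1 - max (p d) (q d)) =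
      2 - 2 * ∑ d, p d * q d := by
  simp only [mul_sum]
  rw [← sum_add_distrib]
  simp only [abs_sub_add_two_mul_min_mul_one_sub_max]
  rw [sum_sub_distrib, sum_add_distrib, hp.2, hq.2, one_add_one_eq_two]

lemma sum_abs_sub_le_of_mem_stdSimplex (hp : p ∈ stdSimplex ℝ D) (hq : q ∈ stdSimplex ℝ D) :
    ∑ d, |p d - q d| ≤ 2 - 2 * ∑ d, p d * q d := by
  rw [← sum_abs_sub_add_two_mul_sum_min_mul_one_sub_max hp hq, le_add_iff_nonneg_right]
  exact mul_nonneg zero_le_two <|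
    sum_nonneg fun d _ => min_mul_one_sub_max_nonneg_of_mem_stdSimplex hp hq d

lemma sum_abs_sub_eq_iff_of_mem_stdSimplex (hp : p ∈ stdSimplex ℝ D) (hq : q ∈ stdSimplex ℝ D) :
    ∑ d, |p d - q d| = 2 - 2 * ∑ d, p d * q d ↔
      ∀ d, min (p d) (q d) * (1 - max (p d) (q d)) = 0 := by
  rw [← sum_abs_sub_add_two_mul_sum_min_mul_one_sub_max hp hq, left_eq_add, mul_eq_zero,
    or_iff_right two_ne_zero, sum_eq_zero_iff_of_nonneg fun d _ =>
      min_mul_one_sub_max_nonneg_of_mem_stdSimplex hp hq d]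
  simp only [mem_univ, true_implies]

lemma sum_abs_sub_eq_iff_eq_ite [DecidableEq D] (hp : p ∈ stdSimplex ℝ D)
    (hq : q ∈ stdSimplex ℝ D) (hsupp : ∀ d, q d = 0 → p d = 0) :
    ∑ d, |p d - q d| = 2 - 2 * ∑ d, p d * q d ↔ ∃ x, ∀ d, p d = if d = x then 1 else 0 := by
  rw [sum_abs_sub_eq_iff_of_mem_stdSimplex hp hq]
  constructor
  · intro h
    obtain ⟨x, -, hx⟩ := exists_ne_zero_of_sum_ne_zero (hp.2.trans_ne one_ne_zero)
    have hqx : q x ≠ 0 := mt (hsupp x) hx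
    refine ⟨x, eq_ite_of_mem_stdSimplex_of_apply_eq_one hp ?_⟩
    have hmax : max (p x) (q x) = 1 := by
      have hmin : 0 < min (p x) (q x) := lt_min ((hp.1 x).lt_of_ne' hx) ((hq.1 x).lt_of_ne' hqx)
      linarith [(mul_eq_zero.1 (h x)).resolve_left hmin.ne']
    rcases max_choice (p x) (q x) with hpx | hqx
    · exact hpx.symm.trans hmax
    · have hq_eq := eq_ite_of_mem_stdSimplex_of_apply_eq_one hq (hqx.symm.trans hmax)
      refine (Fintype.sum_eq_single x fun d hd => hsupp d ?_).symm.trans hp.2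
      rw [hq_eq d, if_neg hd]
  · rintro ⟨x, hx⟩ d
    rw [hx d]
    split_ifs
    · rw [max_eq_left (mem_Icc_of_mem_stdSimplex hq d).2, sub_self, mul_zero]
    · rw [min_eq_left (hq.1 d), zero_mul]

end stdSimplex

section average

variable {ι D : Type*} [Fintype ι] [Nonempty ι] [Fintype D] {μ : ι → D → ℝ}

lemma expect_mem_stdSimplex (hμ : ∀ v, μ v ∈ stdSimplex ℝ D) :
    (fun d => 𝔼 v, μ v d) ∈ stdSimplex ℝ D :=
  ⟨fun d => expect_nonneg fun v _ => (hμ v).1 d, by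
    rw [← expect_sum_comm]; simp only [(hμ _).2, Fintype.expect_const]⟩

omit [Nonempty ι] in
lemma expect_sum_mul_expect (μ : ι → D → ℝ) :
    𝔼 v, ∑ d, μ v d * 𝔼 w, μ w d = ∑ d, (𝔼 v, μ v d) ^ 2 := by
  simp only [expect_sum_comm, ← expect_mul, sq]

lemma expect_two_sub_two_mul_sum_mul_expect (μ : ι → D → ℝ) :
    𝔼 v, (2 - 2 * ∑ d, μ v d * 𝔼 w, μ w d) = 2 * (1 - ∑ d, (𝔼 v, μ v d) ^ 2) := by
  rw [expect_sub_distrib, Fintype.expect_const, ← mul_expect, expect_sum_mul_expect]; ring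

lemma expect_sum_abs_sub_expect_le (hμ : ∀ v, μ v ∈ stdSimplex ℝ D) :
    𝔼 v, ∑ d, |μ v d - 𝔼 w, μ w d| ≤ 2 * (1 - ∑ d, (𝔼 v, μ v d) ^ 2) := by
  rw [← expect_two_sub_two_mul_sum_mul_expect]
  exact expect_le_expect fun v _ =>
    sum_abs_sub_le_of_mem_stdSimplex (hμ v) (expect_mem_stdSimplex hμ)

lemma expect_sum_abs_sub_expect_eq_iff [DecidableEq D] (hμ : ∀ v, μ v ∈ stdSimplex ℝ D) :
    𝔼 v, ∑ d, |μ v d - 𝔼 w, μ w d| = 2 * (1 - ∑ d, (𝔼 v, μ v d) ^ 2) ↔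
      ∀ v, ∃ x, ∀ d, μ v d = if d = x then 1 else 0 := by
  have hmean := expect_mem_stdSimplex hμ
  have hsupp : ∀ v d, 𝔼 w, μ w d = 0 → μ v d = 0 := fun v d h =>
    (expect_eq_zero_iff_of_nonneg fun w _ => (hμ w).1 d).1 h v (mem_univ v)
  rw [← expect_two_sub_two_mul_sum_mul_expect,
    expect_eq_expect_iff_of_le fun v _ => sum_abs_sub_le_of_mem_stdSimplex (hμ v) hmean]
  simp only [mem_univ, true_implies]
  exact forall_congr' fun v => sum_abs_sub_eq_iff_eq_ite (hμ v) hmean (hsupp v)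

end average

theorem stmt14_general {D : Type*} [Fintype D] [DecidableEq D]
    (N : ℕ) (hN : 0 < N) (μ : Fin N → D → ℝ)
    (hpos : ∀ v d, 0 ≤ μ v d) (hsum : ∀ v, ∑ d, μ v d = 1) :
    let μbar : D → ℝ := fun d => (∑ v, μ v d) / N
    let Ψ : ℝ := (1 / N) * ∑ v, ∑ d, |μ v d - μbar d|
    Ψ ≤ 2 * (1 - ∑ d, (μbar d) ^ 2) ∧
    2 * (1 - ∑ d, (μbar d) ^ 2) < 2 ∧
    (Ψ = 2 * ∑ d, μbar d * (1 - μbar d) ↔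
      ∀ v, ∃ x, ∀ d, μ v d = if d = x then 1 else 0) := by
  have : NeZero N := ⟨hN.ne'⟩
  have hμ : ∀ v, μ v ∈ stdSimplex ℝ D := fun v => ⟨hpos v, hsum v⟩
  have hdiv : ∀ f : Fin N → ℝ, (∑ v, f v) / N = 𝔼 v, f v := fun f => by
    rw [Fintype.expect_eq_sum_div_card, Fintype.card_fin]
  have hmul : ∀ f : Fin N → ℝ, 1 / N * ∑ v, f v = 𝔼 v, f v := fun f => by
    rw [← hdiv, one_div_mul_eq_div]
  intro μbar Ψ
  simp only [Ψ, μbar, hdiv, hmul]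
  rw [sum_mul_one_sub_of_mem_stdSimplex (expect_mem_stdSimplex hμ)]
  refine ⟨expect_sum_abs_sub_expect_le hμ, ?_, expect_sum_abs_sub_expect_eq_iff hμ⟩
  linarith [sum_sq_pos_of_mem_stdSimplex (expect_mem_stdSimplex hμ)]

/-- TV dispersion bound: for probability mass functions `μ_1,…,μ_N` on a finite
set with average `μ̄`, the average `ℓ¹` deviation `Ψ` satisfies
`Ψ ≤ 2(1 − ∑ μ̄(d)²) < 2`, with the bound `2∑ μ̄(d)(1−μ̄(d))` attained exactly
when every `μ_v` is a point mass. -/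
theorem stmt14 {D : Type*} [Fintype D] [DecidableEq D] [Nonempty D]
    (N : ℕ) (hN : 0 < N) (μ : Fin N → D → ℝ)
    (hpos : ∀ v d, 0 ≤ μ v d) (hsum : ∀ v, ∑ d, μ v d = 1) :
    let μbar : D → ℝ := fun d => (∑ v, μ v d) / N
    let Ψ : ℝ := (1 / N) * ∑ v, ∑ d, |μ v d - μbar d|
    Ψ ≤ 2 * (1 - ∑ d, (μbar d) ^ 2) ∧
    2 * (1 - ∑ d, (μbar d) ^ 2) < 2 ∧
    (Ψ = 2 * ∑ d, μbar d * (1 - μbar d) ↔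
      ∀ v, ∃ x, ∀ d, μ v d = if d = x then 1 else 0) :=
  stmt14_general N hN μ hpos hsum
end

section
/- Let G and G' be graphs on the same labeled vertex set differing by toggling a single edge {x,y}. For every k ≥ 1, any ordered pair (i,j) whose exact-distance-k status differs between G and G' lies in (B_{k−1}(x) × B_{k−1}(y)) ∪ (B_{k−1}(y) × B_{k−1}(x)), where balls are taken in G ∪ G'; hence the number of entries where B^(k)(G) and B^(k)(G') differ is at most 2·M_{k−1}², where M_r = max_v |B_r(v)|. -/
open Finset
open scoped Classical

private lemma walkSplit {V : Type*} (H Hp : SimpleGraph V) (x y : V)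
    (hadj : ∀ u v, Hp.Adj u v ↔ H.Adj u v ∨ ((u = x ∧ v = y) ∨ (u = y ∧ v = x))) :
    ∀ {i j : V} (w : Hp.Walk i j),
      (∃ w' : H.Walk i j, w'.length = w.length) ∨
      (∃ (p : Hp.Walk i x) (q : Hp.Walk y j), p.length + q.length + 1 ≤ w.length) ∨
      (∃ (p : Hp.Walk i y) (q : Hp.Walk x j), p.length + q.length + 1 ≤ w.length) := by
  intro i j w
  induction w with
  | nil => exact Or.inl ⟨SimpleGraph.Walk.nil, rfl⟩
  | @cons u b j h w ih =>
    rcases (hadj _ _).1 h with hH | hcase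
    · rcases ih with ⟨w', hw'⟩ | ⟨p, q, hpq⟩ | ⟨p, q, hpq⟩
      · exact Or.inl ⟨SimpleGraph.Walk.cons hH w', by simp [hw']⟩
      · exact Or.inr (Or.inl ⟨SimpleGraph.Walk.cons h p, q, by
          simp only [SimpleGraph.Walk.length_cons]; omega⟩)
      · exact Or.inr (Or.inr ⟨SimpleGraph.Walk.cons h p, q, by
          simp only [SimpleGraph.Walk.length_cons]; omega⟩)
    · rcases hcase with ⟨hu, hv⟩ | ⟨hu, hv⟩
      · subst hu; subst hv
        exact Or.inr (Or.inl ⟨SimpleGraph.Walk.nil, w, by simp⟩)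
      · subst hu; subst hv
        exact Or.inr (Or.inr ⟨SimpleGraph.Walk.nil, w, by simp⟩)

private lemma keyLemma {V : Type*} (H Hp : SimpleGraph V) (x y i j : V) (k : ℕ)
    (hk : 1 ≤ k)
    (hadj : ∀ u v, Hp.Adj u v ↔ H.Adj u v ∨ ((u = x ∧ v = y) ∨ (u = y ∧ v = x)))
    (hne : ¬ (H.dist i j = k ↔ Hp.dist i j = k)) :
    (Hp.Reachable x i ∧ Hp.dist x i ≤ k - 1 ∧ Hp.Reachable y j ∧ Hp.dist y j ≤ k - 1) ∨
    (Hp.Reachable y i ∧ Hp.dist y i ≤ k - 1 ∧ Hp.Reachable x j ∧ Hp.dist x j ≤ k - 1) := by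
  have hle : H ≤ Hp := fun {u v} h => (hadj u v).2 (Or.inl h)
  by_cases hH : H.dist i j = k
  · have hHp : Hp.dist i j ≠ k := by tauto
    have hreachH : H.Reachable i j := by
      by_contra hr
      have : H.dist i j = 0 :=
        SimpleGraph.dist_eq_zero_iff_eq_or_not_reachable.2 (Or.inr hr)
      omega
    obtain ⟨wH, hwH⟩ := hreachH.exists_walk_length_eq_dist
    have hreachP : Hp.Reachable i j := ⟨wH.mapLe hle⟩
    have hdle : Hp.dist i j ≤ k := by
      have := SimpleGraph.dist_le (wH.mapLe hle)
      rwa [SimpleGraph.Walk.length_map, hwH, hH] at this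
    obtain ⟨w, hw⟩ := hreachP.exists_walk_length_eq_dist
    rcases walkSplit H Hp x y hadj w with ⟨w', hw'⟩ | ⟨p, q, hpq⟩ | ⟨p, q, hpq⟩
    · have h1 := SimpleGraph.dist_le w'
      omega
    · refine Or.inl ⟨⟨p.reverse⟩, ?_, ⟨q⟩, ?_⟩
      · have := SimpleGraph.dist_le p.reverse
        rw [SimpleGraph.Walk.length_reverse] at this
        omega
      · have := SimpleGraph.dist_le q
        omega
    · refine Or.inr ⟨⟨p.reverse⟩, ?_, ⟨q⟩, ?_⟩
      · have := SimpleGraph.dist_le p.reverse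
        rw [SimpleGraph.Walk.length_reverse] at this
        omega
      · have := SimpleGraph.dist_le q
        omega
  · have hHp : Hp.dist i j = k := by tauto
    have hreachP : Hp.Reachable i j := by
      by_contra hr
      have : Hp.dist i j = 0 :=
        SimpleGraph.dist_eq_zero_iff_eq_or_not_reachable.2 (Or.inr hr)
      omega
    obtain ⟨w, hw⟩ := hreachP.exists_walk_length_eq_dist
    rcases walkSplit H Hp x y hadj w with ⟨w', hw'⟩ | ⟨p, q, hpq⟩ | ⟨p, q, hpq⟩
    · exfalso
      have h1 : H.dist i j ≤ k := by have := SimpleGraph.dist_le w'; omega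
      have hreachH : H.Reachable i j := ⟨w'⟩
      obtain ⟨wS, hwS⟩ := hreachH.exists_walk_length_eq_dist
      have h2 := SimpleGraph.dist_le (wS.mapLe hle)
      rw [SimpleGraph.Walk.length_map, hwS] at h2
      omega
    · refine Or.inl ⟨⟨p.reverse⟩, ?_, ⟨q⟩, ?_⟩
      · have := SimpleGraph.dist_le p.reverse
        rw [SimpleGraph.Walk.length_reverse] at this
        omega
      · have := SimpleGraph.dist_le q
        omega
    · refine Or.inr ⟨⟨p.reverse⟩, ?_, ⟨q⟩, ?_⟩
      · have := SimpleGraph.dist_le p.reverse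
        rw [SimpleGraph.Walk.length_reverse] at this
        omega
      · have := SimpleGraph.dist_le q
        omega

/-- Edge-flip locality: if `G'` is obtained from `G` by toggling the single edge
`{x,y}`, then any ordered pair whose exact-distance-`k` status differs lies in
`(B_{k−1}(x) × B_{k−1}(y)) ∪ (B_{k−1}(y) × B_{k−1}(x))` (balls in `G ∪ G'`),
hence the number of differing entries of `B^(k)` is at most `2·M_{k−1}²`. -/
theorem stmt16 {V : Type*} [Fintype V] [DecidableEq V] (G G' : SimpleGraph V)
    (x y : V) (hxy : x ≠ y)
    (htog : ∀ u v : V, G'.Adj u v ↔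
      Xor' (G.Adj u v) ((u = x ∧ v = y) ∨ (u = y ∧ v = x)))
    (k : ℕ) (hk : 1 ≤ k) :
    let U := G ⊔ G'
    let ball : V → ℕ → Finset V :=
      fun v r => univ.filter fun u => U.Reachable v u ∧ U.dist v u ≤ r
    let M : ℕ → ℕ := fun r => univ.sup fun v => (ball v r).card
    (∀ i j : V,
      (if G.dist i j = k then (1 : ℕ) else 0)
          ≠ (if G'.dist i j = k then 1 else 0) →
      (i ∈ ball x (k - 1) ∧ j ∈ ball y (k - 1)) ∨
      (i ∈ ball y (k - 1) ∧ j ∈ ball x (k - 1))) ∧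
    ((univ ×ˢ univ).filter fun p : V × V =>
        (if G.dist p.1 p.2 = k then (1 : ℕ) else 0)
          ≠ (if G'.dist p.1 p.2 = k then 1 else 0)).card
      ≤ 2 * (M (k - 1)) ^ 2 := by
  intro U ball M
  have hfirst : ∀ i j : V,
      (if G.dist i j = k then (1 : ℕ) else 0)
          ≠ (if G'.dist i j = k then 1 else 0) →
      (i ∈ ball x (k - 1) ∧ j ∈ ball y (k - 1)) ∨
      (i ∈ ball y (k - 1) ∧ j ∈ ball x (k - 1)) := by
    intro i j hdiff
    have hne : ¬ (G.dist i j = k ↔ G'.dist i j = k) :=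
      fun h => hdiff (if_congr h rfl rfl)
    by_cases hG : G.Adj x y
    · -- G has the edge, so G' lacks it; Hp := G, H := G'
      have hadj : ∀ u v, G.Adj u v ↔ G'.Adj u v ∨ ((u = x ∧ v = y) ∨ (u = y ∧ v = x)) := by
        intro u v
        constructor
        · intro h1
          by_cases hp : (u = x ∧ v = y) ∨ (u = y ∧ v = x)
          · exact Or.inr hp
          · exact Or.inl ((htog u v).2 (Or.inl ⟨h1, hp⟩))
        · rintro (h1 | hp)
          · rcases (htog u v).1 h1 with ⟨hg, _⟩ | ⟨hp, _⟩
            · exact hg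
            · rcases hp with ⟨rfl, rfl⟩ | ⟨rfl, rfl⟩
              · exact hG
              · exact hG.symm
          · rcases hp with ⟨rfl, rfl⟩ | ⟨rfl, rfl⟩
            · exact hG
            · exact hG.symm
      have hU : U = G := by
        ext u v
        simp only [U, SimpleGraph.sup_adj]
        constructor
        · rintro (h | h)
          · exact h
          · exact (hadj u v).2 (Or.inl h)
        · exact Or.inl
      have hne' : ¬ (G'.dist i j = k ↔ G.dist i j = k) := by tauto
      rcases keyLemma G' G x y i j k hk hadj hne' with ⟨h1, h2, h3, h4⟩ | ⟨h1, h2, h3, h4⟩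
      · left
        constructor <;> simp only [ball, mem_filter, mem_univ, true_and, hU]
        · exact ⟨h1, h2⟩
        · exact ⟨h3, h4⟩
      · right
        constructor <;> simp only [ball, mem_filter, mem_univ, true_and, hU]
        · exact ⟨h1, h2⟩
        · exact ⟨h3, h4⟩
    · -- G lacks the edge, G' has it; Hp := G', H := G
      have hadj : ∀ u v, G'.Adj u v ↔ G.Adj u v ∨ ((u = x ∧ v = y) ∨ (u = y ∧ v = x)) := by
        intro u v
        rw [htog u v]
        constructor
        · rintro (⟨hg, _⟩ | ⟨hp, _⟩)
          · exact Or.inl hg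
          · exact Or.inr hp
        · rintro (h1 | hp)
          · refine Or.inl ⟨h1, ?_⟩
            rintro (⟨rfl, rfl⟩ | ⟨rfl, rfl⟩)
            · exact hG h1
            · exact hG h1.symm
          · refine Or.inr ⟨hp, ?_⟩
            intro h1
            rcases hp with ⟨rfl, rfl⟩ | ⟨rfl, rfl⟩
            · exact hG h1
            · exact hG h1.symm
      have hU : U = G' := by
        ext u v
        simp only [U, SimpleGraph.sup_adj]
        constructor
        · rintro (h | h)
          · exact (hadj u v).2 (Or.inl h)
          · exact h
        · exact Or.inr
      rcases keyLemma G G' x y i j k hk hadj hne with ⟨h1, h2, h3, h4⟩ | ⟨h1, h2, h3, h4⟩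
      · left
        constructor <;> simp only [ball, mem_filter, mem_univ, true_and, hU]
        · exact ⟨h1, h2⟩
        · exact ⟨h3, h4⟩
      · right
        constructor <;> simp only [ball, mem_filter, mem_univ, true_and, hU]
        · exact ⟨h1, h2⟩
        · exact ⟨h3, h4⟩
  refine ⟨hfirst, ?_⟩
  have hsub : ((univ ×ˢ univ).filter fun p : V × V =>
        (if G.dist p.1 p.2 = k then (1 : ℕ) else 0)
          ≠ (if G'.dist p.1 p.2 = k then 1 else 0)) ⊆
      (ball x (k - 1) ×ˢ ball y (k - 1)) ∪ (ball y (k - 1) ×ˢ ball x (k - 1)) := by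
    intro p hp
    rw [mem_filter] at hp
    rcases hfirst p.1 p.2 hp.2 with ⟨h1, h2⟩ | ⟨h1, h2⟩
    · exact mem_union_left _ (mem_product.2 ⟨h1, h2⟩)
    · exact mem_union_right _ (mem_product.2 ⟨h1, h2⟩)
  have hMx : (ball x (k - 1)).card ≤ M (k - 1) :=
    Finset.le_sup (f := fun v => (ball v (k - 1)).card) (mem_univ x)
  have hMy : (ball y (k - 1)).card ≤ M (k - 1) :=
    Finset.le_sup (f := fun v => (ball v (k - 1)).card) (mem_univ y)
  calc _ ≤ ((ball x (k - 1) ×ˢ ball y (k - 1)) ∪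
          (ball y (k - 1) ×ˢ ball x (k - 1))).card := Finset.card_le_card hsub
    _ ≤ (ball x (k - 1) ×ˢ ball y (k - 1)).card +
          (ball y (k - 1) ×ˢ ball x (k - 1)).card := Finset.card_union_le _ _
    _ = (ball x (k - 1)).card * (ball y (k - 1)).card +
          (ball y (k - 1)).card * (ball x (k - 1)).card := by
          rw [Finset.card_product, Finset.card_product]
    _ ≤ M (k - 1) * M (k - 1) + M (k - 1) * M (k - 1) :=
          Nat.add_le_add (Nat.mul_le_mul hMx hMy) (Nat.mul_le_mul hMy hMx)
    _ = 2 * (M (k - 1)) ^ 2 := by ring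
end
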